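/- Let 𝒮 be a set of homogeneous multilinear polynomials with integer coefficients: each element of 𝒮 is, for some m ≥ 2, a polynomial P(X_1, …, X_m) = Σ_{σ ∈ S_m} c_σ X_{σ(1)}⋯X_{σ(m)} with c_σ ∈ ℤ. Then there exists a noncommutative ring R for which every element of 𝒮 is a polynomial identity if and only if there is a single prime p such that every P(X_1,…,X_m) = Σ_{σ ∈ S_m} c_σ X_{σ(1)}⋯X_{σ(m)} in 𝒮 satisfies: (1) p divides P(1,1,…,1) = Σ_{σ ∈ S_m} c_σ, and (2) p divides Θ_{i,j}(P) := Σ_{σ ∈ S_m, σ⁻¹(i) < σ⁻¹(j)} c_σ for all 1 ≤ i < j ≤ m. Moreover, if such a prime p exists, then every element of 𝒮 is a polynomial identity for the noncommutative ring 𝔽_p⟨U,V⟩/(U², V², UV). -/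

import Mathlib

universe u

open FreeAlgebra

/-- The relation on `𝔽_p⟨U,V⟩` identifying `U²`, `V²` and `UV` with `0`. -/
def relUV (p : ℕ) : FreeAlgebra (ZMod p) (Fin 2) → FreeAlgebra (ZMod p) (Fin 2) → Prop :=
  fun a b => b = 0 ∧
    (a = ι (ZMod p) 0 ^ 2 ∨ a = ι (ZMod p) 1 ^ 2 ∨ a = ι (ZMod p) 0 * ι (ZMod p) 1)

/-- The ring `𝔽_p⟨U,V⟩/(U², V², UV)`. -/
abbrev UVRing (p : ℕ) := RingQuot (relUV p)

/-!
If `P` is an identity of a ring `R`, substituting `1` for every variable gives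
`P(1,…,1) • y = 0` for all `y`, and substituting `a`, `b` for `X_i`, `X_j` and `1` elsewhere gives
`Θ_{i,j}(P) • ab + Θ_{j,i}(P) • ba = 0`; as `Θ_{i,j} + Θ_{j,i} = P(1,…,1)`, this is
`Θ_{i,j}(P) • (ab - ba) = 0`. So a prime dividing the additive order of a nonzero commutator
divides all these numbers.

Conversely, `𝔽_p⟨U,V⟩/(U², V², UV)` is spanned by `1, U, V, VU`, and any product of three of
`U, V, VU` vanishes. By multilinearity it suffices to evaluate `P` on these spanning elements:
with three or more arguments different from `1` every monomial vanishes, and otherwise `P`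
evaluates to a combination of `P(1,…,1)` and the `Θ_{i,j}(P)`, all divisible by `p`. The ring is
noncommutative: `UV = 0`, while `U ↦ E₁₂`, `V ↦ E₀₁` is a representation by `3 × 3` matrices
sending `VU` to `E₀₂ ≠ 0`.
-/

open Equiv Finset

section Products

variable {M : Type*} [Monoid M] {m : ℕ}

theorem prod_ofFn_eq_of_eq_one {f : Fin m → M} {i : Fin m} (h : ∀ t, t ≠ i → f t = 1) :
    (List.ofFn f).prod = f i := by
  induction m with
  | zero => exact i.elim0
  | succ k ih =>
    rw [List.ofFn_succ, List.prod_cons]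
    rcases Fin.eq_zero_or_eq_succ i with rfl | ⟨i, rfl⟩
    · have : ∀ t : Fin k, f t.succ = 1 := fun t => h t.succ t.succ_ne_zero
      rw [List.prod_eq_one (by simpa [List.mem_ofFn] using this), mul_one]
    · rw [h 0 i.succ_ne_zero.symm, one_mul]
      exact ih fun t ht => h t.succ (by simpa using ht)

theorem prod_ofFn_eq_mul_of_eq_one {f : Fin m → M} {i j : Fin m} (hij : i < j)
    (h : ∀ t, t ≠ i → t ≠ j → f t = 1) : (List.ofFn f).prod = f i * f j := by
  induction m with
  | zero => exact i.elim0
  | succ k ih =>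
    rw [List.ofFn_succ, List.prod_cons]
    obtain ⟨j, rfl⟩ := Fin.eq_succ_of_ne_zero (Fin.ne_zero_of_lt hij)
    rcases Fin.eq_zero_or_eq_succ i with rfl | ⟨i, rfl⟩
    · rw [prod_ofFn_eq_of_eq_one fun t ht => h t.succ t.succ_ne_zero (by simpa using ht)]
    · rw [h 0 i.succ_ne_zero.symm j.succ_ne_zero.symm, one_mul]
      exact ih (Fin.succ_lt_succ_iff.1 hij) fun t hi hj =>
        h t.succ (by simpa using hi) (by simpa using hj)

theorem prod_ofFn_perm_eq_ite {f : Fin m → M} {i j : Fin m} (hij : i ≠ j)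
    (h : ∀ t, t ≠ i → t ≠ j → f t = 1) (σ : Perm (Fin m)) :
    (List.ofFn fun t => f (σ t)).prod = if σ⁻¹ i < σ⁻¹ j then f i * f j else f j * f i := by
  have hσ : ∀ t, t ≠ σ⁻¹ i → t ≠ σ⁻¹ j → f (σ t) = 1 := fun t hi hj =>
    h _ (by rintro rfl; simp at hi) (by rintro rfl; simp at hj)
  split_ifs with hlt
  · simpa using prod_ofFn_eq_mul_of_eq_one hlt hσ
  · have hne : σ⁻¹ j ≠ σ⁻¹ i := by simpa using hij.symm
    simpa using prod_ofFn_eq_mul_of_eq_one (lt_of_le_of_ne (not_lt.1 hlt) hne)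
      fun t hj hi => hσ t hi hj

end Products

theorem List.countP_ofFn {α : Type*} {m : ℕ} (p : α → Bool) (f : Fin m → α) :
    (List.ofFn f).countP p = #{t | p (f t)} := by
  rw [card_def, filter_val, Fin.univ_def, List.ofFn_eq_map, List.countP_map]
  simp [List.countP_eq_length_filter, Function.comp_def]

theorem List.prod_eq_zero_of_three_le_countP {M : Type*} [MonoidWithZero M] [DecidableEq M]
    {X : Set M} (hX : ∀ x ∈ X, ∀ y ∈ X, ∀ z ∈ X, x * y * z = 0) {l : List M}
    (hl : ∀ a ∈ l, a = 1 ∨ a ∈ X) (h3 : 3 ≤ l.countP (· != 1)) : l.prod = 0 := by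
  rw [← List.prod_filter_bne_one]
  have hmem : ∀ a ∈ l.filter (· != 1), a ∈ X := fun a ha => by
    simp only [List.mem_filter, bne_iff_ne, ne_eq] at ha
    exact (hl a ha.1).resolve_left ha.2
  rw [List.countP_eq_length_filter] at h3
  obtain ⟨x, y, z, L, hL⟩ : ∃ x y z L, l.filter (· != 1) = x :: y :: z :: L := by
    match l.filter (· != 1), h3 with
    | [], h | [_], h | [_, _], h => simp at h
    | x :: y :: z :: L, _ => exact ⟨x, y, z, L, rfl⟩
  simp only [hL, List.mem_cons, forall_eq_or_imp] at hmem ⊢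
  rw [List.prod_cons, List.prod_cons, List.prod_cons, ← mul_assoc, ← mul_assoc,
    hX x hmem.1 y hmem.2.1 z hmem.2.2.1, zero_mul]

theorem MultilinearMap.eq_zero_of_span_eq_top {k M N ι : Type*} [CommSemiring k]
    [AddCommMonoid M] [Module k M] [AddCommMonoid N] [Module k N] [Fintype ι] {X : Set M}
    (hX : Submodule.span k X = ⊤) {f : MultilinearMap k (fun _ : ι => M) N}
    (hf : ∀ v : ι → M, (∀ i, v i ∈ X) → f v = 0) : f = 0 := by
  classical
  have hsurj : Function.Surjective (Finsupp.linearCombination k ((↑) : X → M)) := by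
    rw [← LinearMap.range_eq_top, Finsupp.range_linearCombination, Subtype.range_coe, hX]
  refine MultilinearMap.ext fun v => show f v = 0 from ?_
  obtain ⟨x, rfl⟩ := Function.Surjective.piMap (fun _ => hsurj) v
  unfold Pi.map
  simp_rw [Finsupp.linearCombination_apply, Finsupp.sum, map_sum_finset, map_smul_univ]
  exact sum_eq_zero fun w _ => by rw [hf _ fun i => (w i).2, smul_zero]

section MultilinearEval

variable {S A : Type*} {m : ℕ}

def multilinearEval [Semiring A] [SMul S A] (c : Perm (Fin m) → S) (r : Fin m → A) : A :=
  ∑ σ, c σ • (List.ofFn fun t => r (σ t)).prod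

def theta [AddCommMonoid S] (c : Perm (Fin m) → S) (i j : Fin m) : S :=
  ∑ σ ∈ univ.filter fun σ : Perm (Fin m) => σ⁻¹ i < σ⁻¹ j, c σ

theorem filter_not_inv_lt_inv {i j : Fin m} (hij : i ≠ j) :
    univ.filter (fun σ : Perm (Fin m) => ¬σ⁻¹ i < σ⁻¹ j) =
      univ.filter fun σ : Perm (Fin m) => σ⁻¹ j < σ⁻¹ i := by
  ext σ
  have : σ⁻¹ j ≠ σ⁻¹ i := by simpa using hij.symm
  simp only [mem_filter, mem_univ, true_and, not_lt]
  exact ⟨fun h => lt_of_le_of_ne h this, le_of_lt⟩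

theorem theta_add_theta [AddCommMonoid S] (c : Perm (Fin m) → S) {i j : Fin m} (hij : i ≠ j) :
    theta c i j + theta c j i = ∑ σ, c σ := by
  rw [theta, theta, ← sum_filter_add_sum_filter_not univ fun σ : Perm (Fin m) => σ⁻¹ i < σ⁻¹ j,
    filter_not_inv_lt_inv hij]

variable [Semiring S] [Semiring A] [Module S A]

theorem multilinearEval_of_forall_eq_one (c : Perm (Fin m) → S) {r : Fin m → A}
    (h : ∀ t, r t = 1) : multilinearEval c r = (∑ σ, c σ) • 1 := by
  rw [multilinearEval, sum_smul]
  exact sum_congr rfl fun σ _ => by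
    rw [List.prod_eq_one (by simpa [List.mem_ofFn] using fun t => h (σ t))]

theorem multilinearEval_of_eq_one (c : Perm (Fin m) → S) {r : Fin m → A} {i : Fin m}
    (h : ∀ t, t ≠ i → r t = 1) : multilinearEval c r = (∑ σ, c σ) • r i := by
  rw [multilinearEval, sum_smul]
  refine sum_congr rfl fun σ _ => ?_
  rw [prod_ofFn_eq_of_eq_one (i := σ⁻¹ i) fun t ht => h _ (by rintro rfl; simp at ht)]
  simp

theorem multilinearEval_of_eq_one_of_ne_of_ne (c : Perm (Fin m) → S) {r : Fin m → A}
    {i j : Fin m} (hij : i ≠ j) (h : ∀ t, t ≠ i → t ≠ j → r t = 1) :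
    multilinearEval c r = theta c i j • (r i * r j) + theta c j i • (r j * r i) := by
  simp only [multilinearEval, prod_ofFn_perm_eq_ite hij h, smul_ite, sum_ite, theta, sum_smul,
    filter_not_inv_lt_inv hij]

theorem multilinearEval_eq_zero_of_card_lt_three [DecidableEq A] {c : Perm (Fin m) → S}
    (hN : ∑ σ, c σ = 0) (hθ : ∀ i j, i ≠ j → theta c i j = 0) {f : Fin m → A}
    (hf : #{t | f t ≠ 1} < 3) : multilinearEval c f = 0 := by
  set s : Finset (Fin m) := {t | f t ≠ 1}
  have hone : ∀ t, t ∉ s → f t = 1 := by simp [s]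
  interval_cases hs : #s
  · rw [multilinearEval_of_forall_eq_one c fun t => hone t (by simp_all), hN, zero_smul]
  · obtain ⟨i, hi⟩ := card_eq_one.1 hs
    rw [multilinearEval_of_eq_one c (i := i) fun t ht => hone t (by simp [hi, ht]), hN, zero_smul]
  · obtain ⟨i, j, hij, hs⟩ := card_eq_two.1 hs
    rw [multilinearEval_of_eq_one_of_ne_of_ne c hij fun t hi hj => hone t (by simp [hs, hi, hj]),
      hθ i j hij, hθ j i hij.symm, zero_smul, zero_smul, add_zero]

theorem multilinearEval_eq_zero_of_three_le_card [DecidableEq A] (c : Perm (Fin m) → S)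
    {X : Set A} (hX : ∀ x ∈ X, ∀ y ∈ X, ∀ z ∈ X, x * y * z = 0) {f : Fin m → A}
    (hf : ∀ t, f t ∈ insert 1 X) (h3 : 3 ≤ #{t | f t ≠ 1}) : multilinearEval c f = 0 := by
  refine sum_eq_zero fun σ _ => ?_
  rw [List.prod_eq_zero_of_three_le_countP hX
    (by simpa [List.mem_ofFn] using fun t => hf (σ t)), smul_zero]
  rw [← Function.comp_def f σ, (σ.ofFn_comp_perm f).countP_eq, List.countP_ofFn]
  simpa using h3

end MultilinearEval

theorem map_multilinearEval {R R' F : Type*} [Ring R] [Ring R'] [FunLike F R R']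
    [RingHomClass F R R'] (f : F) {m : ℕ} (c : Perm (Fin m) → ℤ) (r : Fin m → R) :
    f (multilinearEval c r) = multilinearEval c fun t => f (r t) := by
  simp [multilinearEval, map_list_prod, List.map_ofFn, Function.comp_def]

theorem multilinearEval_eq_zero_of_span {k A : Type*} [CommSemiring k] [Semiring A]
    [Algebra k A] {X : Set A} (hX : ∀ x ∈ X, ∀ y ∈ X, ∀ z ∈ X, x * y * z = 0)
    (hspan : Submodule.span k (insert 1 X) = ⊤) {m : ℕ} {c : Perm (Fin m) → k}
    (hN : ∑ σ, c σ = 0) (hθ : ∀ i j, i < j → theta c i j = 0) (r : Fin m → A) :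
    multilinearEval c r = 0 := by
  classical
  let T : MultilinearMap k (fun _ : Fin m => A) A :=
    ∑ σ, c σ • (MultilinearMap.mkPiAlgebraFin k m A).domDomCongr σ
  have hT : ∀ r, T r = multilinearEval c r := fun r => by simp [T, multilinearEval]
  have hθ' : ∀ i j, i ≠ j → theta c i j = 0 := fun i j hij => by
    rcases hij.lt_or_gt with h | h
    · exact hθ i j h
    · simpa [hθ j i h, hN] using theta_add_theta c hij
  have hT0 : T = 0 := MultilinearMap.eq_zero_of_span_eq_top hspan fun f hf => by
    rw [hT]
    obtain h3 | h3 := lt_or_ge #{t | f t ≠ 1} 3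
    · exact multilinearEval_eq_zero_of_card_lt_three hN hθ' h3
    · exact multilinearEval_eq_zero_of_three_le_card c hX hf h3
  rw [← hT, hT0]
  rfl

section Identity

variable {R : Type*} [Ring R] {m : ℕ} {c : Perm (Fin m) → ℤ}

theorem sum_zsmul_eq_zero_of_identity (hc : ∀ r : Fin m → R, multilinearEval c r = 0) (y : R) :
    (∑ σ, c σ) • y = 0 := by
  have h1 := hc fun _ => 1
  rw [multilinearEval_of_forall_eq_one c fun _ => rfl] at h1
  rw [← one_mul y, ← smul_mul_assoc, h1, zero_mul]

theorem theta_zsmul_commutator_eq_zero_of_identity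
    (hc : ∀ r : Fin m → R, multilinearEval c r = 0) {i j : Fin m} (hij : i ≠ j) (a b : R) :
    theta c i j • (a * b - b * a) = 0 := by
  have hpair := hc fun t => if t = i then a else if t = j then b else 1
  rw [multilinearEval_of_eq_one_of_ne_of_ne c hij fun t hi hj => by simp [hi, hj]] at hpair
  simp only [if_pos, if_neg hij.symm] at hpair
  calc theta c i j • (a * b - b * a)
      = (theta c i j • (a * b) + theta c j i • (b * a)) -
          (theta c i j + theta c j i) • (b * a) := by
        rw [add_smul, smul_sub]; abel
    _ = 0 := by rw [hpair, theta_add_theta c hij, sum_zsmul_eq_zero_of_identity hc, sub_zero]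

end Identity

theorem exists_prime_forall_zsmul_eq_zero_dvd {G : Type*} [AddGroup G] {x : G} (hx : x ≠ 0) :
    ∃ p : ℕ, p.Prime ∧ ∀ n : ℤ, n • x = 0 → (p : ℤ) ∣ n :=
  -- `addOrderOf x = 0` when `x` has infinite order, and then `minFac` picks `2`
  ⟨(addOrderOf x).minFac, Nat.minFac_prime (by simpa using hx), fun _ hn =>
    (Int.natCast_dvd_natCast.2 (Nat.minFac_dvd _)).trans (addOrderOf_dvd_iff_zsmul_eq_zero.2 hn)⟩

namespace UVRing

variable (p : ℕ)

noncomputable def u : UVRing p := RingQuot.mkAlgHom (ZMod p) (relUV p) (ι (ZMod p) 0)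

noncomputable def v : UVRing p := RingQuot.mkAlgHom (ZMod p) (relUV p) (ι (ZMod p) 1)

theorem u_mul_u : u p * u p = 0 := by
  simpa [u, sq] using RingQuot.mkAlgHom_rel (ZMod p) (s := relUV p) ⟨rfl, Or.inl rfl⟩

theorem v_mul_v : v p * v p = 0 := by
  simpa [v, sq] using RingQuot.mkAlgHom_rel (ZMod p) (s := relUV p) ⟨rfl, Or.inr (Or.inl rfl)⟩

theorem u_mul_v : u p * v p = 0 := by
  simpa [u, v] using RingQuot.mkAlgHom_rel (ZMod p) (s := relUV p) ⟨rfl, Or.inr (Or.inr rfl)⟩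

theorem v_mul_v_mul (x : UVRing p) : v p * (v p * x) = 0 := by
  rw [← mul_assoc, v_mul_v, zero_mul]

theorem u_mul_v_mul (x : UVRing p) : u p * (v p * x) = 0 := by
  rw [← mul_assoc, u_mul_v, zero_mul]

theorem mul_mul_eq_zero :
    ∀ x ∈ ({u p, v p, v p * u p} : Set (UVRing p)), ∀ y ∈ ({u p, v p, v p * u p} : Set (UVRing p)),
      ∀ z ∈ ({u p, v p, v p * u p} : Set (UVRing p)), x * y * z = 0 := by
  simp only [Set.mem_insert_iff, Set.mem_singleton_iff]
  rintro x (rfl | rfl | rfl) y (rfl | rfl | rfl) z (rfl | rfl | rfl) <;>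
    simp [mul_assoc, u_mul_u, v_mul_v, u_mul_v, u_mul_v_mul, v_mul_v_mul]

theorem span_eq_top :
    Submodule.span (ZMod p) (insert 1 {u p, v p, v p * u p}) = ⊤ := by
  set M := Submodule.span (ZMod p) (insert 1 {u p, v p, v p * u p} : Set (UVRing p))
  have hM : M * M ≤ M := by
    rw [Submodule.span_mul_span, Submodule.span_le]
    rintro _ ⟨x, hx, y, hy, rfl⟩
    simp only [Set.mem_insert_iff, Set.mem_singleton_iff] at hx hy
    rcases hx with rfl | rfl | rfl | rfl <;> rcases hy with rfl | rfl | rfl | rfl <;>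
      simp only [one_mul, mul_one, mul_assoc, u_mul_u, v_mul_v, u_mul_v, u_mul_v_mul, v_mul_v_mul,
        mul_zero, SetLike.mem_coe, zero_mem] <;>
      exact Submodule.subset_span (by simp)
  rw [eq_top_iff]
  rintro x -
  obtain ⟨y, rfl⟩ := RingQuot.mkAlgHom_surjective (ZMod p) (relUV p) x
  induction y using FreeAlgebra.induction with
  | grade0 r =>
    rw [AlgHom.commutes, Algebra.algebraMap_eq_smul_one]
    exact M.smul_mem r (Submodule.subset_span (by simp))
  | grade1 i =>
    fin_cases i
    · exact Submodule.subset_span (by simp [u])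
    · exact Submodule.subset_span (by simp [v])
  | mul x y hx hy => rw [map_mul]; exact hM (Submodule.mul_mem_mul hx hy)
  | add x y hx hy => rw [map_add]; exact add_mem hx hy

theorem v_mul_u_ne_zero [Nontrivial (ZMod p)] : v p * u p ≠ 0 := by
  let E : Fin 2 → Matrix (Fin 3) (Fin 3) (ZMod p) := ![Matrix.single 1 2 1, Matrix.single 0 1 1]
  have hrel : ∀ ⦃x y⦄, relUV p x y →
      FreeAlgebra.lift (ZMod p) E x = FreeAlgebra.lift (ZMod p) E y := by
    rintro x y ⟨rfl, rfl | rfl | rfl⟩ <;>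
      simp [E, sq, Matrix.single_mul_single_of_ne, Fin.ext_iff]
  let φ := RingQuot.liftAlgHom (ZMod p) (s := relUV p) ⟨FreeAlgebra.lift (ZMod p) E, hrel⟩
  have hφ : φ (v p * u p) = Matrix.single 0 2 1 := by
    simp [φ, u, v, E, Matrix.single_mul_single_same]
  intro h
  rw [h, map_zero] at hφ
  simpa using congrFun (congrFun hφ 0) 2

theorem u_mul_v_ne_v_mul_u [Nontrivial (ZMod p)] : u p * v p ≠ v p * u p := by
  rw [u_mul_v]
  exact (v_mul_u_ne_zero p).symm

theorem multilinearEval_eq_zero {m : ℕ} {c : Perm (Fin m) → ℤ} (hN : (p : ℤ) ∣ ∑ σ, c σ)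
    (hθ : ∀ i j, i < j → (p : ℤ) ∣ theta c i j) (r : Fin m → UVRing p) :
    multilinearEval c r = 0 := by
  have hcast : multilinearEval c r = multilinearEval (fun σ => (c σ : ZMod p)) r :=
    sum_congr rfl fun σ _ => (Int.cast_smul_eq_zsmul (ZMod p) _ _).symm
  rw [hcast]
  refine multilinearEval_eq_zero_of_span (mul_mul_eq_zero p) (span_eq_top p) ?_ ?_ r
  · exact_mod_cast (ZMod.intCast_zmod_eq_zero_iff_dvd _ p).2 hN
  · intro i j hij
    simpa [theta] using (ZMod.intCast_zmod_eq_zero_iff_dvd _ p).2 (hθ i j hij)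

end UVRing

/-- The polynomial `Σ_σ c_σ X_{σ(1)}⋯X_{σ(m)}` in `m` variables is recorded as `c ∈ 𝒮 m`. -/
theorem multilinear_identities_noncomm_general
    (𝒮 : ∀ m : ℕ, Set (Equiv.Perm (Fin m) → ℤ)) :
    ((∃ (R : Type u) (_ : Ring R), (∃ a b : R, a * b ≠ b * a) ∧
        ∀ m, ∀ c ∈ 𝒮 m, ∀ r : Fin m → R,
          ∑ σ : Equiv.Perm (Fin m), c σ • (List.ofFn fun t => r (σ t)).prod = 0) ↔
      (∃ p : ℕ, p.Prime ∧ ∀ m, ∀ c ∈ 𝒮 m,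
        ((p : ℤ) ∣ ∑ σ : Equiv.Perm (Fin m), c σ) ∧
        ∀ i j : Fin m, i < j →
          (p : ℤ) ∣ ∑ σ ∈ Finset.filter
            (fun σ : Equiv.Perm (Fin m) => σ⁻¹ i < σ⁻¹ j) Finset.univ, c σ)) ∧
    ∀ p : ℕ, p.Prime →
      (∀ m, ∀ c ∈ 𝒮 m,
        ((p : ℤ) ∣ ∑ σ : Equiv.Perm (Fin m), c σ) ∧
        ∀ i j : Fin m, i < j →
          (p : ℤ) ∣ ∑ σ ∈ Finset.filter
            (fun σ : Equiv.Perm (Fin m) => σ⁻¹ i < σ⁻¹ j) Finset.univ, c σ) →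
      ∀ m, ∀ c ∈ 𝒮 m, ∀ r : Fin m → UVRing p,
        ∑ σ : Equiv.Perm (Fin m), c σ • (List.ofFn fun t => r (σ t)).prod = 0 := by
  have moreover (p : ℕ)
      (hp : ∀ m, ∀ c ∈ 𝒮 m, (p : ℤ) ∣ ∑ σ, c σ ∧ ∀ i j, i < j → (p : ℤ) ∣ theta c i j)
      (m : ℕ) (c : Perm (Fin m) → ℤ) (hc : c ∈ 𝒮 m) (r : Fin m → UVRing p) :
      multilinearEval c r = 0 :=
    UVRing.multilinearEval_eq_zero p (hp m c hc).1 (hp m c hc).2 r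
  refine ⟨⟨?_, ?_⟩, fun p _ => moreover p⟩
  · rintro ⟨R, _, ⟨a, b, hab⟩, hid⟩
    obtain ⟨p, hp, hdvd⟩ := exists_prime_forall_zsmul_eq_zero_dvd (sub_ne_zero.2 hab)
    exact ⟨p, hp, fun m c hc => ⟨hdvd _ (sum_zsmul_eq_zero_of_identity (hid m c hc) _),
      fun i j hij => hdvd _ (theta_zsmul_commutator_eq_zero_of_identity (hid m c hc) hij.ne a b)⟩⟩
  · rintro ⟨p, hp, hcond⟩
    have := Fact.mk hp
    refine ⟨ULift (UVRing p), inferInstance, ⟨⟨UVRing.u p⟩, ⟨UVRing.v p⟩, fun h =>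
      UVRing.u_mul_v_ne_v_mul_u p (congrArg ULift.down h)⟩, fun m c hc r => ?_⟩
    apply ULift.ringEquiv.injective
    change ULift.ringEquiv (multilinearEval c r) = _
    rw [map_zero, map_multilinearEval]
    exact moreover p hcond m c hc _

/-- Theorem 5.1: a set `𝒮` of homogeneous multilinear polynomials (the polynomial with `m`
variables and coefficients `c : S_m → ℤ` being `Σ_σ c_σ X_{σ(1)}⋯X_{σ(m)}`, recorded here
as `c ∈ 𝒮 m`) consists of identities of some noncommutative ring iff there is a single
prime `p` dividing `P(1,…,1)` and all `Θ_{i,j}(P)` for every `P ∈ 𝒮`; moreover, in that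
case every element of `𝒮` is an identity for `𝔽_p⟨U,V⟩/(U², V², UV)`. -/
theorem multilinear_identities_noncomm
    (𝒮 : ∀ m : ℕ, Set (Equiv.Perm (Fin m) → ℤ))
    (h𝒮 : ∀ m, ∀ c ∈ 𝒮 m, 2 ≤ m) :
    ((∃ (R : Type u) (_ : Ring R), (∃ a b : R, a * b ≠ b * a) ∧
        ∀ m, ∀ c ∈ 𝒮 m, ∀ r : Fin m → R,
          ∑ σ : Equiv.Perm (Fin m), c σ • (List.ofFn fun t => r (σ t)).prod = 0) ↔
      (∃ p : ℕ, p.Prime ∧ ∀ m, ∀ c ∈ 𝒮 m,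
        ((p : ℤ) ∣ ∑ σ : Equiv.Perm (Fin m), c σ) ∧
        ∀ i j : Fin m, i < j →
          (p : ℤ) ∣ ∑ σ ∈ Finset.filter
            (fun σ : Equiv.Perm (Fin m) => σ⁻¹ i < σ⁻¹ j) Finset.univ, c σ)) ∧
    ∀ p : ℕ, p.Prime →
      (∀ m, ∀ c ∈ 𝒮 m,
        ((p : ℤ) ∣ ∑ σ : Equiv.Perm (Fin m), c σ) ∧
        ∀ i j : Fin m, i < j →
          (p : ℤ) ∣ ∑ σ ∈ Finset.filter
            (fun σ : Equiv.Perm (Fin m) => σ⁻¹ i < σ⁻¹ j) Finset.univ, c σ) →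
      ∀ m, ∀ c ∈ 𝒮 m, ∀ r : Fin m → UVRing p,
        ∑ σ : Equiv.Perm (Fin m), c σ • (List.ofFn fun t => r (σ t)).prod = 0 :=
  multilinear_identities_noncomm_general 𝒮
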